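/- Let Q(x5,x6,x7) = Σ_{5≤i≤j≤7} q_{ij} x_i x_j and Q'(x1,x2,x3) = Σ_{1≤i≤j≤3} q'_{ij} x_i x_j be quadratic forms over ℂ. The only homogeneous polynomials of degree 2 in x1,...,x7 that lie both in the square of the ideal (x1,x2,x3,x4,Q) and in the square of the ideal (x4,x5,x6,x7,Q') are the scalar multiples of x4². -/

import Mathlib

/- STATEMENT 2: In ℂ[x1,…,x7], the only homogeneous polynomials of degree 2 lying
both in the square of the ideal (x1,x2,x3,x4,Q(x5,x6,x7)) of the conic C and in the
square of the ideal (x4,x5,x6,x7,Q'(x1,x2,x3)) of the conic C' are the scalar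
multiples of x4². Variables x1,…,x7 ↔ indices 0,…,6 of Fin 7 (so x4 is X 3). -/

open MvPolynomial

noncomputable def Qpoly (q : Fin 3 → Fin 3 → ℂ) : MvPolynomial (Fin 7) ℂ :=
  ∑ i : Fin 3, ∑ j : Fin 3,
    C (q i j) * X (⟨i.1 + 4, by omega⟩ : Fin 7) * X (⟨j.1 + 4, by omega⟩ : Fin 7)

noncomputable def Q'poly (q' : Fin 3 → Fin 3 → ℂ) : MvPolynomial (Fin 7) ℂ :=
  ∑ i : Fin 3, ∑ j : Fin 3,
    C (q' i j) * X (⟨i.1, by omega⟩ : Fin 7) * X (⟨j.1, by omega⟩ : Fin 7)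

/-!
For a set `S` of variables, the ideal generated by the variables in `S` and a quadratic form
lies in the monomial ideal of monomials of degree `≥ 2` or of `S`-degree `≥ 1`; its square
therefore lies in the monomial ideal of monomials of degree `≥ 3` or of `S`-degree `≥ 2`.
So every monomial of a quadric `F` in both squares has `x1,…,x4`-degree `2` and
`x4,…,x7`-degree `2`, which leaves only `x4²`.
-/

namespace Finsupp

variable {σ : Type*}

theorem weight_mono (w : σ → ℕ) : Monotone (weight w : (σ →₀ ℕ) → ℕ) := by
  intro d e hde
  obtain ⟨f, rfl⟩ := exists_add_of_le hde
  simp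

end Finsupp

namespace MvPolynomial

open Finsupp

variable {σ R : Type*} [CommSemiring R]

noncomputable def degOrWeightIdeal (w : σ → ℕ) (a b : ℕ) : Ideal (MvPolynomial σ R) :=
  Ideal.span ((monomial · 1) '' {d | a ≤ d.degree ∨ b ≤ d.weight w})

variable {w : σ → ℕ} {a b : ℕ}

theorem IsHomogeneous.degree_eq_of_mem_support {p : MvPolynomial σ R} {n : ℕ}
    (hp : p.IsHomogeneous n) {d : σ →₀ ℕ} (hd : d ∈ p.support) : d.degree = n := by
  by_contra h
  exact mem_support_iff.mp hd (hp.coeff_eq_zero h)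

theorem X_mem_degOrWeightIdeal {i : σ} (hi : b ≤ w i) :
    (X i : MvPolynomial σ R) ∈ degOrWeightIdeal w a b :=
  Ideal.subset_span ⟨Finsupp.single i 1, Or.inr (by simpa [weight_single] using hi), rfl⟩

theorem IsHomogeneous.mem_degOrWeightIdeal {p : MvPolynomial σ R} {n : ℕ}
    (hp : p.IsHomogeneous n) (ha : a ≤ n) : p ∈ degOrWeightIdeal w a b :=
  mem_ideal_span_monomial_image.mpr fun d hd =>
    ⟨d, Or.inl (hp.degree_eq_of_mem_support hd ▸ ha), le_rfl⟩

theorem degOrWeightIdeal_mul_le (ha : 1 ≤ a) :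
    degOrWeightIdeal w a 1 * degOrWeightIdeal w a 1 ≤
      (degOrWeightIdeal w (a + 1) 2 : Ideal (MvPolynomial σ R)) := by
  rw [degOrWeightIdeal, Ideal.span_mul_span, Ideal.span_le]
  rintro _ ⟨_, ⟨d, hd, rfl⟩, _, ⟨e, he, rfl⟩, rfl⟩
  refine Ideal.subset_span ⟨d + e, ?_, by simp [monomial_mul]⟩
  have pos_degree : ∀ f : σ →₀ ℕ, 1 ≤ f.weight w → 1 ≤ f.degree := fun f hf => by
    rw [Nat.one_le_iff_ne_zero, Ne, degree_eq_zero_iff]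
    rintro rfl
    simp at hf
  have := pos_degree d
  have := pos_degree e
  simp only [Set.mem_ofPred_eq, map_add] at hd he ⊢
  omega

theorem le_weight_of_mem_degOrWeightIdeal {p : MvPolynomial σ R} {n : ℕ}
    (hp : p ∈ degOrWeightIdeal w a b) (hpn : p.IsHomogeneous n) (hn : n < a)
    {d : σ →₀ ℕ} (hd : d ∈ p.support) : b ≤ d.weight w := by
  obtain ⟨e, he, hed⟩ := mem_ideal_span_monomial_image.mp hp d hd
  have := degree_mono hed
  rw [hpn.degree_eq_of_mem_support hd] at this
  exact (he.resolve_left (by omega)).trans (weight_mono w hed)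

theorem isHomogeneous_sum_C_mul_X_mul_X {ι : Type*} [Fintype ι] (c : ι → ι → R)
    (e e' : ι → σ) : (∑ i, ∑ j, C (c i j) * X (e i) * X (e' j)).IsHomogeneous 2 :=
  IsHomogeneous.sum _ _ _ fun _ _ => IsHomogeneous.sum _ _ _ fun _ _ =>
    (isHomogeneous_C_mul_X _ _).mul (isHomogeneous_X _ _)

theorem sq_span_X_le_degOrWeightIdeal {i j k l : σ} (hi : 1 ≤ w i) (hj : 1 ≤ w j)
    (hk : 1 ≤ w k) (hl : 1 ≤ w l) {Q : MvPolynomial σ R} (hQ : Q.IsHomogeneous 2) :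
    Ideal.span {X i, X j, X k, X l, Q} ^ 2 ≤ degOrWeightIdeal w 3 2 := by
  have hspan : Ideal.span {X i, X j, X k, X l, Q} ≤ degOrWeightIdeal w 2 1 := by
    rw [Ideal.span_le]
    rintro g (rfl | rfl | rfl | rfl | rfl)
    exacts [X_mem_degOrWeightIdeal hi, X_mem_degOrWeightIdeal hj, X_mem_degOrWeightIdeal hk,
      X_mem_degOrWeightIdeal hl, hQ.mem_degOrWeightIdeal le_rfl]
  calc Ideal.span {X i, X j, X k, X l, Q} ^ 2
      ≤ degOrWeightIdeal w 2 1 * degOrWeightIdeal w 2 1 := by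
        rw [← sq]; exact Ideal.pow_right_mono hspan 2
    _ ≤ degOrWeightIdeal w 3 2 := degOrWeightIdeal_mul_le one_le_two

end MvPolynomial

open Finsupp

def weightC (i : Fin 7) : ℕ := if (i : ℕ) ≤ 3 then 1 else 0

def weightC' (i : Fin 7) : ℕ := if 3 ≤ (i : ℕ) then 1 else 0

theorem eq_single_three_two_of_le_weight {d : Fin 7 →₀ ℕ} (hd : d.degree = 2)
    (hC : 2 ≤ d.weight weightC) (hC' : 2 ≤ d.weight weightC') : d = single 3 2 := by
  simp only [degree_eq_sum, weight_eq_sum, Fin.sum_univ_seven, weightC, weightC'] at hd hC hC'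
  norm_num at hC hC'
  ext i
  fin_cases i <;> simp <;> omega

theorem degree_two_in_both_ideal_squares
    (q q' : Fin 3 → Fin 3 → ℂ) (F : MvPolynomial (Fin 7) ℂ)
    (hF : F.IsHomogeneous 2) :
    (F ∈ (Ideal.span {X 0, X 1, X 2, X 3, Qpoly q} : Ideal (MvPolynomial (Fin 7) ℂ)) ^ 2 ∧
     F ∈ (Ideal.span {X 3, X 4, X 5, X 6, Q'poly q'} : Ideal (MvPolynomial (Fin 7) ℂ)) ^ 2)
    ↔ ∃ c : ℂ, F = C c * X 3 ^ 2 := by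
  constructor
  · rintro ⟨hFC, hFC'⟩
    have hC := sq_span_X_le_degOrWeightIdeal (w := weightC) (by decide) (by decide) (by decide)
      (by decide) (isHomogeneous_sum_C_mul_X_mul_X _ _ _) hFC
    have hC' := sq_span_X_le_degOrWeightIdeal (w := weightC') (by decide) (by decide)
      (by decide) (by decide) (isHomogeneous_sum_C_mul_X_mul_X _ _ _) hFC'
    refine ⟨F.coeff (single 3 2), ?_⟩
    rw [X_pow_eq_monomial, C_mul_monomial, mul_one]
    refine eq_monomial_of_support_subset_singleton fun d hd => ?_
    exact eq_single_three_two_of_le_weight (hF.degree_eq_of_mem_support hd)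
      (le_weight_of_mem_degOrWeightIdeal hC hF (by norm_num) hd)
      (le_weight_of_mem_degOrWeightIdeal hC' hF (by norm_num) hd)
  · rintro ⟨c, rfl⟩
    refine ⟨Ideal.mul_mem_left _ _ ?_, Ideal.mul_mem_left _ _ ?_⟩ <;>
      exact Ideal.pow_mem_pow (Ideal.subset_span (by simp)) 2
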